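/- Let C be the chain complex over ℤ concentrated in degrees −1 and −2 with C_{−1} = free abelian group on {p^l : l ∈ ℤ} and C_{−2} = free abelian group on {q^l : l ∈ ℤ}, with boundary ∂p^l = q^l − q^{l−1} and ∂q^l = 0. Then H_{−1}(C) = 0 and H_{−2}(C) ≅ ℤ. -/

import Mathlib

/-- The boundary operator `∂ p^l = q^l − q^{l−1}` on the free abelian group
`ℤ →₀ ℤ` (generators `p^l`, `l ∈ ℤ`, mapped to combinations of `q^l`). -/
noncomputable def henonBoundary : (ℤ →₀ ℤ) →ₗ[ℤ] (ℤ →₀ ℤ) :=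
  Finsupp.lsum ℤ fun l => Finsupp.lsingle l - Finsupp.lsingle (l - 1)

/-!
`∂` is `1 - shift`, so `(∂ f) m = f m - f (m + 1)`. A finitely supported `f` killed by `∂` is
constant, hence zero. The image of `∂` is the kernel of the augmentation `f ↦ ∑ₗ f l`, because
modulo the image every `q^l` is homologous to `q^0`; the augmentation is onto `ℤ`.
-/

theorem Finsupp.eq_zero_of_apply_add_one {M : Type*} [Zero M] {f : ℤ →₀ M}
    (hf : ∀ m, f (m + 1) = f m) : f = 0 := by
  have hconst : ∀ m n, f m = f n := by
    suffices ∀ m, f m = f 0 from fun m n => (this m).trans (this n).symm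
    intro m
    induction m using Int.induction_on with
    | zero => rfl
    | succ i ih => rw [hf, ih]
    | pred i ih => rw [← ih, ← hf, sub_add_cancel]
  obtain ⟨n, hn⟩ := Infinite.exists_notMem_finset f.support
  ext m
  rw [hconst m n, Finsupp.notMem_support_iff.mp hn, Finsupp.coe_zero, Pi.zero_apply]

namespace henonBoundary

theorem single (l c : ℤ) :
    henonBoundary (Finsupp.single l c) = Finsupp.single l c - Finsupp.single (l - 1) c := by
  simp only [henonBoundary, Finsupp.lsum_single, LinearMap.sub_apply, Finsupp.lsingle_apply]

theorem apply (f : ℤ →₀ ℤ) (m : ℤ) : henonBoundary f m = f m - f (m + 1) := by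
  induction f using Finsupp.induction_linear with
  | zero => simp
  | add f g hf hg => simp only [map_add, Finsupp.add_apply, hf, hg]; ring
  | single l c =>
    simp only [single, Finsupp.sub_apply, Finsupp.single_apply]
    split_ifs <;> omega

theorem ker_eq_bot : LinearMap.ker henonBoundary = ⊥ := by
  refine LinearMap.ker_eq_bot'.mpr fun f hf => Finsupp.eq_zero_of_apply_add_one fun m => ?_
  have := congrArg (· m) hf
  simp only [apply, Finsupp.coe_zero, Pi.zero_apply, sub_eq_zero] at this
  exact this.symm

end henonBoundary

noncomputable def augmentation : (ℤ →₀ ℤ) →ₗ[ℤ] ℤ :=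
  Finsupp.lsum ℤ fun _ => LinearMap.id

theorem augmentation_single (l c : ℤ) : augmentation (Finsupp.single l c) = c := by
  simp only [augmentation, Finsupp.lsum_single, LinearMap.id_apply]

theorem augmentation_surjective : Function.Surjective augmentation :=
  fun c => ⟨Finsupp.single 0 c, augmentation_single 0 c⟩

theorem augmentation_comp_henonBoundary : augmentation ∘ₗ henonBoundary = 0 :=
  Finsupp.lhom_ext fun l c => by
    simp [henonBoundary.single, augmentation_single]

theorem single_sub_single_zero_mem_range (l c : ℤ) :
    Finsupp.single l c - Finsupp.single 0 c ∈ LinearMap.range henonBoundary := by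
  induction l using Int.induction_on with
  | zero => simp
  | succ i ih =>
    have hstep := LinearMap.mem_range_self henonBoundary (Finsupp.single ((i : ℤ) + 1) c)
    rw [henonBoundary.single, add_sub_cancel_right] at hstep
    simpa using add_mem hstep ih
  | pred i ih =>
    have hstep := LinearMap.mem_range_self henonBoundary (Finsupp.single (-(i : ℤ)) c)
    rw [henonBoundary.single] at hstep
    simpa using sub_mem ih hstep

theorem sub_single_augmentation_mem_range (f : ℤ →₀ ℤ) :
    f - Finsupp.single 0 (augmentation f) ∈ LinearMap.range henonBoundary := by
  induction f using Finsupp.induction_linear with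
  | zero => simp
  | add f g hf hg =>
    simpa only [map_add, Finsupp.single_add, add_sub_add_comm] using add_mem hf hg
  | single l c => simpa only [augmentation_single] using single_sub_single_zero_mem_range l c

theorem range_henonBoundary : LinearMap.range henonBoundary = LinearMap.ker augmentation := by
  refine le_antisymm (LinearMap.range_le_ker_iff.mpr augmentation_comp_henonBoundary) ?_
  intro f hf
  simpa [LinearMap.mem_ker.mp hf] using sub_single_augmentation_mem_range f

/-- for the complex `C_{−1} = ℤ⟨p^l : l ∈ ℤ⟩`, `C_{−2} = ℤ⟨q^l : l ∈ ℤ⟩`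
with `∂ p^l = q^l − q^{l−1}` and `∂ q^l = 0`, one has `H_{−1} = ker ∂ = 0` and
`H_{−2} = C_{−2}/Im ∂ ≅ ℤ`. -/
theorem stmt4 :
    LinearMap.ker henonBoundary = ⊥ ∧
    Nonempty (((ℤ →₀ ℤ) ⧸ LinearMap.range henonBoundary) ≃ₗ[ℤ] ℤ) :=
  ⟨henonBoundary.ker_eq_bot,
    ⟨(Submodule.quotEquivOfEq _ _ range_henonBoundary).trans
      (augmentation.quotKerEquivOfSurjective augmentation_surjective)⟩⟩
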